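/- For all real intervals J₁ and J₂ with J₁ ⊆ J₂, the operators on the Fock space 𝓕 satisfy the nest relations v^{⟨1_{J₁},1_{J₂}⟩}·E_{J₁} ∘ E_{J₂} = v^{⟨1_{J₂},1_{J₁}⟩}·E_{J₂} ∘ E_{J₁} and v^{⟨1_{J₁},1_{J₂}⟩}·F_{J₁} ∘ F_{J₂} = v^{⟨1_{J₂},1_{J₁}⟩}·F_{J₂} ∘ F_{J₁} as K-linear endomorphisms of 𝓕. -/

import Mathlib

noncomputable section
open Function
open scoped Classical

/-- The `ℕ`-valued indicator function of the interval `[a, b)`. -/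
def ind (a b : ℝ) : ℝ → ℕ := (Set.Ico a b).indicator fun _ => 1

/-- A real pyramid: a function `p : ℝ → ℕ` vanishing outside a bounded set, maximal at `0`,
nondecreasing on `(-∞, 0]`, nonincreasing on `[0, ∞)`, right-continuous and piecewise
constant with finitely many discontinuities, and with jumps of size at most 1
(`p₋(x)` is the left limit of `p` at `x`). -/
def IsRealPyramid (p : ℝ → ℕ) : Prop :=
  (∃ M : ℝ, ∀ x : ℝ, M ≤ |x| → p x = 0) ∧
  (∀ x, p x ≤ p 0) ∧
  (∀ ⦃x y : ℝ⦄, x ≤ y → y ≤ 0 → p x ≤ p y) ∧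
  (∀ ⦃x y : ℝ⦄, 0 ≤ x → x ≤ y → p y ≤ p x) ∧
  (∀ x, ContinuousWithinAt p (Set.Ici x) x) ∧
  {x : ℝ | ¬ ContinuousAt p x}.Finite ∧
  (∀ x, |(p x : ℤ) - ((Function.leftLim p x : ℕ) : ℤ)| ≤ 1)

/-- The interval `[a, b)` is addable for `p` if `p + 1_{[a,b)}` is again a real pyramid. -/
def Addable (p : ℝ → ℕ) (a b : ℝ) : Prop := IsRealPyramid (fun x => p x + ind a b x)

/-- The interval `[a, b)` is removable for `p` if `p ≥ 1` on `[a, b)` and `p − 1_{[a,b)}`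
is again a real pyramid. -/
def Removable (p : ℝ → ℕ) (a b : ℝ) : Prop :=
  (∀ x ∈ Set.Ico a b, 1 ≤ p x) ∧ IsRealPyramid (fun x => p x - ind a b x)

/-- `n_J(p)`: `1` if `J = [a,b)` is addable for `p`, `−1` if removable, `0` otherwise. -/
def nJ (p : ℝ → ℕ) (a b : ℝ) : ℤ :=
  if Addable p a b then 1 else if Removable p a b then -1 else 0

/-- The base field `K = ℚ(t)`. -/
abbrev K : Type := RatFunc ℚ

/-- The variable `t ∈ K` (playing the role of `υ^{1/2}`). -/
def tK : K := RatFunc.X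

/-- The quantum parameter `v := t²`. -/
def vK : K := tK ^ 2

/-- The type of real pyramids. -/
def Pyr : Type := {p : ℝ → ℕ // IsRealPyramid p}

/-- The Fock space: the `K`-vector space with basis `|p⟩` indexed by real pyramids. -/
abbrev Fock : Type := Pyr →₀ K

/-- `E_J |p⟩ = −t·(−v)^{p(b)−p(a)} |p − 1_J⟩` if `J = [a,b)` is removable for `p`,
and `0` otherwise. -/
def Evec (a b : ℝ) (p : Pyr) : Fock :=
  if h : Removable p.1 a b then
    Finsupp.single ⟨fun x => p.1 x - ind a b x, h.2⟩
      (-tK * (-vK) ^ ((p.1 b : ℤ) - (p.1 a : ℤ)))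
  else 0

/-- `F_J |p⟩ = t·(−v)^{p(a)−p(b)} |p + 1_J⟩` if `J = [a,b)` is addable for `p`,
and `0` otherwise. -/
def Fvec (a b : ℝ) (p : Pyr) : Fock :=
  if h : Addable p.1 a b then
    Finsupp.single ⟨fun x => p.1 x + ind a b x, h⟩
      (tK * (-vK) ^ ((p.1 a : ℤ) - (p.1 b : ℤ)))
  else 0

/-- The `K`-linear operator `E_J` on the Fock space. -/
def Eop (a b : ℝ) : Fock →ₗ[K] Fock :=
  Finsupp.lsum K fun p => LinearMap.toSpanSingleton K Fock (Evec a b p)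

/-- The `K`-linear operator `F_J` on the Fock space. -/
def Fop (a b : ℝ) : Fock →ₗ[K] Fock :=
  Finsupp.lsum K fun p => LinearMap.toSpanSingleton K Fock (Fvec a b p)

/-- The `K`-linear operator `K_J` on the Fock space: `K_J |p⟩ = v^{n_J(p)} |p⟩`. -/
def Kop (a b : ℝ) : Fock →ₗ[K] Fock :=
  Finsupp.lsum K fun p =>
    LinearMap.toSpanSingleton K Fock (Finsupp.single p (vK ^ (nJ p.1 a b)))

/-- The `K`-linear operator `K_J⁻¹` on the Fock space: `K_J⁻¹ |p⟩ = v^{−n_J(p)} |p⟩`. -/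
def Kinvop (a b : ℝ) : Fock →ₗ[K] Fock :=
  Finsupp.lsum K fun p =>
    LinearMap.toSpanSingleton K Fock (Finsupp.single p (vK ^ (-nJ p.1 a b)))

/-- The `ℤ`-valued indicator function of the interval `[a, b)`. -/
def indZ (a b : ℝ) : ℝ → ℤ := (Set.Ico a b).indicator fun _ => 1

/-- The Euler-form pairing `⟨f, g⟩ = Σ_x f₋(x) (g₋(x) − g(x))` for integer-valued step
functions, as a finitely supported sum over `x ∈ ℝ`. -/
def pairZ (f g : ℝ → ℤ) : ℤ :=
  ∑ᶠ x : ℝ, Function.leftLim f x * (Function.leftLim g x - g x)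

/-!
For a real pyramid `p` the jump `p x - p₋ x` lies in `{0, 1}` for `x ≤ 0` and in `{-1, 0}` for
`x > 0`. If `J₁ ⊆ J₂` share an endpoint, adding (or removing) both intervals shifts the jump there
by `±2`, so no pyramid admits both steps and both composites vanish. Otherwise the four endpoints
are distinct, and whenever `p` and `p + 1_J + 1_J'` are pyramids so is `p + 1_J`: monotonicity
interpolates pointwise because the intervals are nested, and each jump of `p + 1_J` is a jump of
`p` or of `p + 1_J + 1_J'`. So both orders of adding (or removing, which is adding read backwards)
`J₁` and `J₂` are possible for the same pyramids. Each endpoint of one interval lies on a fixed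
side of the other, so the coefficients of both composites agree, and both pairings
`⟨1_{J₁}, 1_{J₂}⟩`, `⟨1_{J₂}, 1_{J₁}⟩` vanish.
-/

open Set Filter Topology Function

section Indicator

variable {M : Type*} [Zero M] {a b x : ℝ}

theorem continuousWithinAt_indicator_Ico_Ici [TopologicalSpace M] (c : M) (a b x : ℝ) :
    ContinuousWithinAt ((Ico a b).indicator fun _ => c) (Ici x) x := by
  have hmem : ∀ᶠ y in 𝓝[≥] x, (y ∈ Ico a b ↔ x ∈ Ico a b) := by
    rcases lt_or_ge x a with hxa | hax
    · filter_upwards [Ico_mem_nhdsGE hxa] with y hy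
      simp only [mem_Ico]
      constructor <;> intro h <;> linarith [h.1, hy.2]
    rcases lt_or_ge x b with hxb | hbx
    · filter_upwards [Ico_mem_nhdsGE hxb] with y hy
      simp only [mem_Ico]
      constructor <;> intro _ <;> constructor <;> linarith [hy.1, hy.2]
    · filter_upwards [self_mem_nhdsWithin] with y (hy : x ≤ y)
      simp only [mem_Ico]
      constructor <;> intro h <;> linarith [h.2]
  refine tendsto_nhds_of_eventually_eq ?_
  filter_upwards [hmem] with y hy
  simp only [indicator_apply, hy]

theorem eventually_indicator_Ico_nhdsLT (c : M) (a b x : ℝ) :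
    ∀ᶠ y in 𝓝[<] x, (Ico a b).indicator (fun _ => c) y = (Ioc a b).indicator (fun _ => c) x := by
  have hmem : ∀ᶠ y in 𝓝[<] x, (y ∈ Ico a b ↔ x ∈ Ioc a b) := by
    rcases le_or_gt x a with hxa | hax
    · filter_upwards [self_mem_nhdsWithin] with y (hy : y < x)
      simp only [mem_Ico, mem_Ioc]
      constructor <;> intro h <;> linarith [h.1]
    rcases le_or_gt x b with hxb | hbx
    · filter_upwards [Ioo_mem_nhdsLT hax] with y hy
      simp only [mem_Ico, mem_Ioc]
      constructor <;> intro _ <;> constructor <;> linarith [hy.1, hy.2]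
    · filter_upwards [Ioo_mem_nhdsLT hbx] with y hy
      simp only [mem_Ico, mem_Ioc]
      constructor <;> intro h <;> linarith [h.1, h.2, hy.1]
  filter_upwards [hmem] with y hy
  simp only [indicator_apply, hy]

theorem indicator_Ioc_eq_indicator_Ico (f : ℝ → M) (hxa : x ≠ a) (hxb : x ≠ b) :
    (Ioc a b).indicator f x = (Ico a b).indicator f x := by
  have hmem : x ∈ Ioc a b ↔ x ∈ Ico a b := by
    rw [mem_Ioc, mem_Ico, hxa.symm.le_iff_lt, hxb.le_iff_lt]
  simp only [indicator_apply, hmem]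

theorem continuousAt_indicator_Ico [TopologicalSpace M] (c : M) (hxa : x ≠ a) (hxb : x ≠ b) :
    ContinuousAt ((Ico a b).indicator fun _ => c) x := by
  refine continuousOn_const.continuousAt_indicator fun hx => ?_
  rcases lt_or_ge a b with hab | hba
  · rw [frontier_Ico hab] at hx
    rcases hx with rfl | rfl <;> contradiction
  · rw [Ico_eq_empty (not_lt.2 hba), frontier_empty] at hx
    exact hx

end Indicator

section StepFunction

variable {β : Type*} [TopologicalSpace β] [DiscreteTopology β] {f : ℝ → β} {x : ℝ}

theorem leftLim_eq_of_eventually_eq {c : β} (h : ∀ᶠ y in 𝓝[<] x, f y = c) : leftLim f x = c :=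
  leftLim_eq_of_tendsto (tendsto_nhds_of_eventually_eq h)

theorem eventually_eq_leftLim (hf : {x | ¬ContinuousAt f x}.Finite) (x : ℝ) :
    ∀ᶠ y in 𝓝[<] x, f y = leftLim f x := by
  have hcont : ∀ᶠ y in 𝓝[<] x, ContinuousAt f y := by
    have hS : (({x | ¬ContinuousAt f x} \ {x})ᶜ : Set ℝ) ∈ 𝓝 x :=
      (hf.sdiff.isClosed.isOpen_compl).mem_nhds fun h => h.2 rfl
    filter_upwards [mem_nhdsWithin_of_mem_nhds hS, self_mem_nhdsWithin] with y hy (hyx : y < x)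
    by_contra hy'
    exact hy ⟨hy', hyx.ne⟩
  obtain ⟨l, hlx, hl⟩ := mem_nhdsLT_iff_exists_Ioo_subset.1 hcont
  have hconst : ∀ y ∈ Ioo l x, f y = f ((l + x) / 2) := fun y hy =>
    isPreconnected_Ioo.constant (fun z hz => (hl hz).continuousWithinAt) hy
      ⟨by linarith [mem_Iio.1 hlx], by linarith [mem_Iio.1 hlx]⟩
  have hev : ∀ᶠ y in 𝓝[<] x, f y = f ((l + x) / 2) := mem_of_superset (Ioo_mem_nhdsLT hlx) hconst
  rw [leftLim_eq_of_eventually_eq hev]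
  exact hev

end StepFunction

section IndicatorNat

variable {p : ℝ → ℕ} {a b x : ℝ}

theorem ind_le_one (a b x : ℝ) : ind a b x ≤ 1 :=
  indicator_apply_le' (fun _ => le_rfl) fun _ => zero_le_one

theorem leftLim_add_ind (hp : {x | ¬ContinuousAt p x}.Finite) (a b x : ℝ) :
    leftLim (fun y => p y + ind a b y) x = leftLim p x + (Ioc a b).indicator (fun _ => 1) x := by
  refine leftLim_eq_of_eventually_eq ?_
  filter_upwards [eventually_eq_leftLim hp x, eventually_indicator_Ico_nhdsLT 1 a b x]
    with y hpy hy
  rw [← hpy, ← hy]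
  rfl

theorem finite_setOf_not_continuousAt_add_ind (hp : {x | ¬ContinuousAt p x}.Finite) (a b : ℝ) :
    {x | ¬ContinuousAt (fun y => p y + ind a b y) x}.Finite := by
  refine (hp.union (toFinite {a, b})).subset fun x hx => ?_
  by_contra hx'
  simp only [mem_union, mem_ofPred_eq, mem_insert_iff, mem_singleton_iff, not_or, not_not] at hx'
  exact hx (hx'.1.add (continuousAt_indicator_Ico 1 hx'.2.1 hx'.2.2))

theorem indicator_Ioc_eq_ind (hxa : x ≠ a) (hxb : x ≠ b) :
    (Ioc a b).indicator (fun _ => 1) x = ind a b x :=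
  indicator_Ioc_eq_indicator_Ico _ hxa hxb

end IndicatorNat

namespace IsRealPyramid

variable {p : ℝ → ℕ} {a b c d x : ℝ}

theorem finite_setOf_not_continuousAt (hp : IsRealPyramid p) :
    {x | ¬ContinuousAt p x}.Finite :=
  hp.2.2.2.2.2.1

theorem abs_sub_leftLim_le (hp : IsRealPyramid p) (x : ℝ) :
    |(p x : ℤ) - (leftLim p x : ℕ)| ≤ 1 :=
  hp.2.2.2.2.2.2 x

theorem leftLim_le (hp : IsRealPyramid p) (hx : x ≤ 0) : leftLim p x ≤ p x := by
  obtain ⟨-, -, hmono, -, -, hfin, -⟩ := hp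
  obtain ⟨y, hy, hyx : y < x⟩ := (eventually_eq_leftLim hfin x).and self_mem_nhdsWithin |>.exists
  exact hy ▸ hmono hyx.le hx

theorem le_leftLim (hp : IsRealPyramid p) (hx : 0 < x) : p x ≤ leftLim p x := by
  obtain ⟨-, -, -, hanti, -, hfin, -⟩ := hp
  obtain ⟨y, hy, hy0, hyx⟩ := (eventually_eq_leftLim hfin x).and (Ioo_mem_nhdsLT hx) |>.exists
  exact hy ▸ hanti hy0.le hyx.le

theorem add_ind_of_add_ind_add_ind (hp : IsRealPyramid p)
    (hq : IsRealPyramid fun x => p x + ind a b x + ind c d x)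
    (hnest : Ico a b ⊆ Ico c d ∨ Ico c d ⊆ Ico a b) (hends : Disjoint ({a, b} : Set ℝ) {c, d}) :
    IsRealPyramid fun x => p x + ind a b x := by
  obtain ⟨-, -, hp_mono, hp_anti, hp_rc, hp_fin, hp_jump⟩ := hp
  obtain ⟨⟨M, hM⟩, -, hq_mono, hq_anti, -, -, hq_jump⟩ := hq
  have hle : (∀ x, ind a b x ≤ ind c d x) ∨ ∀ x, ind c d x ≤ ind a b x :=
    hnest.imp (fun h => indicator_le_indicator_of_subset h fun _ => zero_le_one)
      (fun h => indicator_le_indicator_of_subset h fun _ => zero_le_one)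
  -- This fails only for `x ∈ [a, b) \ [c, d)` and `y ∈ [c, d) \ [a, b)`, which nesting excludes.
  have hmid : ∀ x y, p x ≤ p y → p x + ind a b x + ind c d x ≤ p y + ind a b y + ind c d y →
      p x + ind a b x ≤ p y + ind a b y := by
    intro x y hxy hqxy
    have := ind_le_one a b x; have := ind_le_one a b y
    have := ind_le_one c d x; have := ind_le_one c d y
    rcases hle with h | h <;> have := h x <;> have := h y <;> omega
  have hmono : ∀ ⦃x y : ℝ⦄, x ≤ y → y ≤ 0 → p x + ind a b x ≤ p y + ind a b y :=
    fun x y hxy hy => hmid x y (hp_mono hxy hy) (hq_mono hxy hy)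
  have hanti : ∀ ⦃x y : ℝ⦄, 0 ≤ x → x ≤ y → p y + ind a b y ≤ p x + ind a b x :=
    fun x y hx hxy => hmid y x (hp_anti hx hxy) (hq_anti hx hxy)
  refine ⟨⟨M, fun x hx => ?_⟩, fun x => ?_, hmono, hanti,
    fun x => (hp_rc x).add (continuousWithinAt_indicator_Ico_Ici 1 a b x),
    finite_setOf_not_continuousAt_add_ind hp_fin a b, fun x => ?_⟩
  · have := hM x hx
    simp only at this ⊢
    omega
  · rcases le_total x 0 with hx | hx
    exacts [hmono hx le_rfl, hanti le_rfl hx]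
  · have hpx := hp_jump x
    have hqx := hq_jump x
    simp only at hqx ⊢
    rw [leftLim_add_ind (finite_setOf_not_continuousAt_add_ind hp_fin a b),
      leftLim_add_ind hp_fin] at hqx
    rw [leftLim_add_ind hp_fin]
    by_cases hx : x ∈ ({a, b} : Set ℝ)
    · have hx' : x ∉ ({c, d} : Set ℝ) := disjoint_left.1 hends hx
      simp only [mem_insert_iff, mem_singleton_iff, not_or] at hx'
      rw [indicator_Ioc_eq_ind hx'.1 hx'.2] at hqx
      rw [abs_le] at hqx ⊢
      push_cast at hqx ⊢
      omega
    · simp only [mem_insert_iff, mem_singleton_iff, not_or] at hx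
      rw [indicator_Ioc_eq_ind hx.1 hx.2]
      rw [abs_le] at hpx ⊢
      push_cast at hpx ⊢
      omega

theorem not_add_ind_add_ind_of_common_endpoint (hp : IsRealPyramid p) (hab : a < b) (hcd : c < d)
    (he : a = c ∨ b = d) : ¬IsRealPyramid fun x => p x + ind a b x + ind c d x := by
  intro hq
  have hfin := hp.finite_setOf_not_continuousAt
  have hshift : ∀ e, (ind a b e + ind c d e = 2 ∧
      (Ioc a b).indicator (fun _ => 1) e + (Ioc c d).indicator (fun _ => 1) e = 0) ∨
      (ind a b e + ind c d e = 0 ∧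
      (Ioc a b).indicator (fun _ => 1) e + (Ioc c d).indicator (fun _ => 1) e = 2) → False := by
    intro e he
    have hpj := hp.abs_sub_leftLim_le e
    have hqj := hq.abs_sub_leftLim_le e
    have hq_lim : leftLim (fun x => p x + ind a b x + ind c d x) e =
        leftLim p e + (Ioc a b).indicator (fun _ => 1) e + (Ioc c d).indicator (fun _ => 1) e := by
      rw [leftLim_add_ind (finite_setOf_not_continuousAt_add_ind hfin a b), leftLim_add_ind hfin]
    rw [hq_lim] at hqj
    simp only at hqj
    rw [abs_le] at hpj hqj
    push_cast at hpj hqj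
    rcases le_or_gt e 0 with h0 | h0
    · have := hp.leftLim_le h0
      have := hq.leftLim_le h0
      rw [hq_lim] at this
      omega
    · have := hp.le_leftLim h0
      have := hq.le_leftLim h0
      rw [hq_lim] at this
      omega
  rcases he with rfl | rfl
  · exact hshift a (Or.inl (by simp [ind, hab, hcd]))
  · exact hshift b (Or.inr (by simp [ind, hab, hcd]))

end IsRealPyramid

section AddableRemovable

variable {p : ℝ → ℕ} {a b c d : ℝ}

theorem ind_of_mem {x : ℝ} (hx : x ∈ Ico a b) : ind a b x = 1 :=
  indicator_of_mem hx _

theorem mem_Ico_iff_of_nest (hab : a < b) (hcd : c < d)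
    (hnest : Ico a b ⊆ Ico c d ∨ Ico c d ⊆ Ico a b) (hends : Disjoint ({a, b} : Set ℝ) {c, d}) :
    a ∈ Ico c d ↔ b ∈ Ico c d := by
  have ha : a ∉ ({c, d} : Set ℝ) := disjoint_left.1 hends (mem_insert a _)
  have hb : b ∉ ({c, d} : Set ℝ) := disjoint_left.1 hends (mem_insert_of_mem a rfl)
  simp only [mem_insert_iff, mem_singleton_iff, not_or] at ha hb
  rcases hnest with h | h
  · obtain ⟨hca, hbd⟩ := (Ico_subset_Ico_iff hab).1 h
    exact iff_of_true ⟨hca, hab.trans_le hbd⟩ ⟨hca.trans hab.le, lt_of_le_of_ne hbd hb.2⟩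
  · obtain ⟨hac, hdb⟩ := (Ico_subset_Ico_iff hcd).1 h
    exact iff_of_false (fun h => ha.1 (le_antisymm hac h.1))
      fun h => hb.2 (le_antisymm h.2.le hdb)

theorem ind_eq_ind_of_nest (hab : a < b) (hcd : c < d)
    (hnest : Ico a b ⊆ Ico c d ∨ Ico c d ⊆ Ico a b) (hends : Disjoint ({a, b} : Set ℝ) {c, d}) :
    ind c d a = ind c d b := by
  simp only [ind, indicator_apply, mem_Ico_iff_of_nest hab hcd hnest hends]

theorem Addable.isRealPyramid (h : Addable p a b) : IsRealPyramid fun x => p x + ind a b x := h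

theorem Removable.isRealPyramid (h : Removable p a b) : IsRealPyramid fun x => p x - ind a b x :=
  h.2

theorem Removable.ind_le (h : Removable p a b) (x : ℝ) : ind a b x ≤ p x :=
  indicator_apply_le' (h.1 x) fun _ => Nat.zero_le _

theorem ind_add_ind_le_of_removable (h : Removable p a b)
    (h' : Removable (fun x => p x - ind a b x) c d) (x : ℝ) : ind a b x + ind c d x ≤ p x := by
  have := h.ind_le x
  have := h'.ind_le x
  omega

theorem addable_add_ind_swap (hp : IsRealPyramid p)
    (hnest : Ico a b ⊆ Ico c d ∨ Ico c d ⊆ Ico a b) (hends : Disjoint ({a, b} : Set ℝ) {c, d})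
    (h : Addable p a b ∧ Addable (fun x => p x + ind a b x) c d) :
    Addable p c d ∧ Addable (fun x => p x + ind c d x) a b := by
  have htop : IsRealPyramid fun x => p x + ind c d x + ind a b x := by
    convert h.2.isRealPyramid using 2 with x
    omega
  exact ⟨hp.add_ind_of_add_ind_add_ind htop hnest.symm hends.symm, htop⟩

theorem addable_add_ind_comm (hp : IsRealPyramid p)
    (hnest : Ico a b ⊆ Ico c d ∨ Ico c d ⊆ Ico a b) (hends : Disjoint ({a, b} : Set ℝ) {c, d}) :
    Addable p a b ∧ Addable (fun x => p x + ind a b x) c d ↔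
      Addable p c d ∧ Addable (fun x => p x + ind c d x) a b :=
  ⟨addable_add_ind_swap hp hnest hends, addable_add_ind_swap hp hnest.symm hends.symm⟩

/-- `p` is obtained from the pyramid `r` left after both removals by adding `[a, b)` and then
`[c, d)`, so `add_ind_of_add_ind_add_ind` applies to `r`. -/
theorem removable_sub_ind_swap (hp : IsRealPyramid p)
    (hnest : Ico a b ⊆ Ico c d ∨ Ico c d ⊆ Ico a b) (hends : Disjoint ({a, b} : Set ℝ) {c, d})
    (h : Removable p a b ∧ Removable (fun x => p x - ind a b x) c d) :
    Removable p c d ∧ Removable (fun x => p x - ind c d x) a b := by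
  obtain ⟨h, h'⟩ := h
  have hle := ind_add_ind_le_of_removable h h'
  have htop : IsRealPyramid fun x => (p x - ind a b x - ind c d x) + ind a b x + ind c d x := by
    convert hp using 2 with x
    have := hle x
    omega
  have hmid := h'.isRealPyramid.add_ind_of_add_ind_add_ind htop hnest hends
  refine ⟨⟨fun x hx => ?_, ?_⟩, fun x hx => ?_, ?_⟩
  · have := hle x
    rw [ind_of_mem hx] at this
    omega
  · convert hmid using 2 with x
    have := hle x
    omega
  · have := hle x
    rw [ind_of_mem hx] at this
    dsimp only
    omega
  · convert h'.isRealPyramid using 2 with x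
    exact Nat.sub_right_comm _ _ _

theorem removable_sub_ind_comm (hp : IsRealPyramid p)
    (hnest : Ico a b ⊆ Ico c d ∨ Ico c d ⊆ Ico a b) (hends : Disjoint ({a, b} : Set ℝ) {c, d}) :
    Removable p a b ∧ Removable (fun x => p x - ind a b x) c d ↔
      Removable p c d ∧ Removable (fun x => p x - ind c d x) a b :=
  ⟨removable_sub_ind_swap hp hnest hends, removable_sub_ind_swap hp hnest.symm hends.symm⟩

theorem not_removable_sub_ind_of_common_endpoint (hp : IsRealPyramid p) (hab : a < b)
    (hcd : c < d) (he : a = c ∨ b = d) :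
    ¬(Removable p a b ∧ Removable (fun x => p x - ind a b x) c d) := by
  rintro ⟨h, h'⟩
  refine h'.isRealPyramid.not_add_ind_add_ind_of_common_endpoint hcd hab
    (he.imp Eq.symm Eq.symm) ?_
  convert hp using 2 with x
  have := ind_add_ind_le_of_removable h h' x
  omega

end AddableRemovable

section Operators

/-- `Pyr` is a plain `def`, so `⟨p, hp⟩ : Pyr` has the unfolded type `{p // IsRealPyramid p}`,
which defeats `rw`; `Pyr.mk` keeps the type `Pyr`. -/
def Pyr.mk (p : ℝ → ℕ) (hp : IsRealPyramid p) : Pyr := ⟨p, hp⟩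

@[simp]
theorem Pyr.val_mk (p : ℝ → ℕ) (hp : IsRealPyramid p) : (Pyr.mk p hp).1 = p := rfl

variable {q : Pyr} {a b c d : ℝ}

theorem Eop_single (a b : ℝ) (q : Pyr) (k : K) :
    Eop a b (Finsupp.single q k) = k • Evec a b q := by
  simp [Eop]

theorem Fop_single (a b : ℝ) (q : Pyr) (k : K) :
    Fop a b (Finsupp.single q k) = k • Fvec a b q := by
  simp [Fop]

theorem Evec_of_removable (h : Removable q.1 a b) :
    Evec a b q = Finsupp.single (Pyr.mk (fun x => q.1 x - ind a b x) h.isRealPyramid)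
      (-tK * (-vK) ^ ((q.1 b : ℤ) - (q.1 a : ℤ))) :=
  dif_pos h

theorem Evec_of_not_removable (h : ¬Removable q.1 a b) : Evec a b q = 0 :=
  dif_neg h

theorem Fvec_of_addable (h : Addable q.1 a b) :
    Fvec a b q = Finsupp.single (Pyr.mk (fun x => q.1 x + ind a b x) h.isRealPyramid)
      (tK * (-vK) ^ ((q.1 a : ℤ) - (q.1 b : ℤ))) :=
  dif_pos h

theorem Fvec_of_not_addable (h : ¬Addable q.1 a b) : Fvec a b q = 0 :=
  dif_neg h

theorem Eop_Evec_of_not_removable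
    (h : ¬(Removable q.1 a b ∧ Removable (fun x => q.1 x - ind a b x) c d)) :
    Eop c d (Evec a b q) = 0 := by
  by_cases hab : Removable q.1 a b
  · rw [Evec_of_removable hab, Eop_single,
      Evec_of_not_removable (q := Pyr.mk _ hab.isRealPyramid) fun h' => h ⟨hab, h'⟩, smul_zero]
  · rw [Evec_of_not_removable hab, map_zero]

theorem Fop_Fvec_of_not_addable
    (h : ¬(Addable q.1 a b ∧ Addable (fun x => q.1 x + ind a b x) c d)) :
    Fop c d (Fvec a b q) = 0 := by
  by_cases hab : Addable q.1 a b
  · rw [Fvec_of_addable hab, Fop_single,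
      Fvec_of_not_addable (q := Pyr.mk _ hab.isRealPyramid) fun h' => h ⟨hab, h'⟩, smul_zero]
  · rw [Fvec_of_not_addable hab, map_zero]

theorem Eop_Evec_of_removable (h : Removable q.1 a b)
    (h' : Removable (fun x => q.1 x - ind a b x) c d) (hind : ind a b c = ind a b d) :
    Eop c d (Evec a b q) =
      Finsupp.single (Pyr.mk (fun x => q.1 x - ind a b x - ind c d x) h'.isRealPyramid)
        (-tK * (-vK) ^ ((q.1 b : ℤ) - (q.1 a : ℤ)) * (-tK * (-vK) ^ ((q.1 d : ℤ) - (q.1 c : ℤ)))) := by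
  rw [Evec_of_removable h, Eop_single, Evec_of_removable (q := Pyr.mk _ h.isRealPyramid) h',
    Finsupp.smul_single, smul_eq_mul]
  have := h.ind_le c
  have := h.ind_le d
  have hexp : ((q.1 d - ind a b d : ℕ) : ℤ) - ((q.1 c - ind a b c : ℕ) : ℤ) = q.1 d - q.1 c := by
    omega
  simp only [Pyr.val_mk, hexp]

theorem Fop_Fvec_of_addable (h : Addable q.1 a b)
    (h' : Addable (fun x => q.1 x + ind a b x) c d) (hind : ind a b c = ind a b d) :
    Fop c d (Fvec a b q) =
      Finsupp.single (Pyr.mk (fun x => q.1 x + ind a b x + ind c d x) h'.isRealPyramid)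
        (tK * (-vK) ^ ((q.1 a : ℤ) - (q.1 b : ℤ)) * (tK * (-vK) ^ ((q.1 c : ℤ) - (q.1 d : ℤ)))) := by
  rw [Fvec_of_addable h, Fop_single, Fvec_of_addable (q := Pyr.mk _ h.isRealPyramid) h',
    Finsupp.smul_single, smul_eq_mul]
  have hexp : ((q.1 c + ind a b c : ℕ) : ℤ) - ((q.1 d + ind a b d : ℕ) : ℤ) = q.1 c - q.1 d := by
    omega
  simp only [Pyr.val_mk, hexp]

theorem Eop_comp_Eop_comm (hab : a < b) (hcd : c < d)
    (hnest : Ico a b ⊆ Ico c d ∨ Ico c d ⊆ Ico a b) (hends : Disjoint ({a, b} : Set ℝ) {c, d}) :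
    Eop a b ∘ₗ Eop c d = Eop c d ∘ₗ Eop a b := by
  ext q : 2
  simp only [LinearMap.comp_apply, Finsupp.lsingle_apply, Eop_single, one_smul]
  have hind_ab := ind_eq_ind_of_nest hcd hab hnest.symm hends.symm
  have hind_cd := ind_eq_ind_of_nest hab hcd hnest hends
  by_cases h : Removable q.1 c d ∧ Removable (fun x => q.1 x - ind c d x) a b
  · obtain ⟨h₁, h₂⟩ := (removable_sub_ind_comm q.2 hnest hends).2 h
    rw [Eop_Evec_of_removable h.1 h.2 hind_cd, Eop_Evec_of_removable h₁ h₂ hind_ab, mul_comm]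
    congr 2 with x
    exact Nat.sub_right_comm _ _ _
  · rw [Eop_Evec_of_not_removable h,
      Eop_Evec_of_not_removable (mt (removable_sub_ind_comm q.2 hnest hends).1 h)]

theorem Fop_comp_Fop_comm (hab : a < b) (hcd : c < d)
    (hnest : Ico a b ⊆ Ico c d ∨ Ico c d ⊆ Ico a b) (hends : Disjoint ({a, b} : Set ℝ) {c, d}) :
    Fop a b ∘ₗ Fop c d = Fop c d ∘ₗ Fop a b := by
  ext q : 2
  simp only [LinearMap.comp_apply, Finsupp.lsingle_apply, Fop_single, one_smul]
  have hind_ab := ind_eq_ind_of_nest hcd hab hnest.symm hends.symm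
  have hind_cd := ind_eq_ind_of_nest hab hcd hnest hends
  by_cases h : Addable q.1 c d ∧ Addable (fun x => q.1 x + ind c d x) a b
  · obtain ⟨h₁, h₂⟩ := (addable_add_ind_comm q.2 hnest hends).2 h
    rw [Fop_Fvec_of_addable h.1 h.2 hind_cd, Fop_Fvec_of_addable h₁ h₂ hind_ab, mul_comm]
    congr 2 with x
    exact add_right_comm _ _ _
  · rw [Fop_Fvec_of_not_addable h,
      Fop_Fvec_of_not_addable (mt (addable_add_ind_comm q.2 hnest hends).1 h)]

theorem Eop_comp_Eop_eq_zero (hab : a < b) (hcd : c < d) (he : a = c ∨ b = d) :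
    Eop c d ∘ₗ Eop a b = 0 := by
  ext q : 2
  simp only [LinearMap.comp_apply, Finsupp.lsingle_apply, Eop_single, one_smul,
    LinearMap.zero_apply]
  exact Eop_Evec_of_not_removable (not_removable_sub_ind_of_common_endpoint q.2 hab hcd he)

theorem Fop_comp_Fop_eq_zero (hab : a < b) (hcd : c < d) (he : a = c ∨ b = d) :
    Fop c d ∘ₗ Fop a b = 0 := by
  ext q : 2
  simp only [LinearMap.comp_apply, Finsupp.lsingle_apply, Fop_single, one_smul,
    LinearMap.zero_apply]
  exact Fop_Fvec_of_not_addable fun h =>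
    q.2.not_add_ind_add_ind_of_common_endpoint hab hcd he h.2.isRealPyramid

end Operators

section Pairing

variable {a b c d : ℝ}

theorem leftLim_indZ (a b x : ℝ) : leftLim (indZ a b) x = (Ioc a b).indicator (fun _ => 1) x :=
  leftLim_eq_of_eventually_eq (eventually_indicator_Ico_nhdsLT 1 a b x)

theorem pairZ_indZ (f : ℝ → ℤ) (hab : a < b) : pairZ f (indZ a b) = leftLim f b - leftLim f a := by
  unfold pairZ
  rw [finsum_eq_sum_of_support_subset (s := {a, b}) _ ?_, Finset.sum_pair hab.ne]
  · rw [leftLim_indZ, leftLim_indZ]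
    simp [indZ, hab]
    ring
  · intro x hx
    by_contra hx'
    simp only [Finset.coe_insert, Finset.coe_singleton, mem_insert_iff, mem_singleton_iff,
      not_or] at hx'
    rw [mem_support, leftLim_indZ, indicator_Ioc_eq_indicator_Ico _ hx'.1 hx'.2] at hx
    exact hx (mul_eq_zero_of_right _ (sub_self (indZ a b x)))

theorem pairZ_indZ_indZ_eq_zero (hab : a < b) (hcd : c < d)
    (hnest : Ico a b ⊆ Ico c d ∨ Ico c d ⊆ Ico a b) (hends : Disjoint ({a, b} : Set ℝ) {c, d}) :
    pairZ (indZ a b) (indZ c d) = 0 := by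
  have hc : c ∉ ({a, b} : Set ℝ) := disjoint_right.1 hends (mem_insert c _)
  have hd : d ∉ ({a, b} : Set ℝ) := disjoint_right.1 hends (mem_insert_of_mem c rfl)
  simp only [mem_insert_iff, mem_singleton_iff, not_or] at hc hd
  rw [pairZ_indZ _ hcd, leftLim_indZ, leftLim_indZ, indicator_Ioc_eq_indicator_Ico _ hc.1 hc.2,
    indicator_Ioc_eq_indicator_Ico _ hd.1 hd.2]
  simp only [indicator_apply, mem_Ico_iff_of_nest hcd hab hnest.symm hends.symm, sub_self]

end Pairing

/-- the nest relations
`v^{⟨1_{J₁},1_{J₂}⟩}·E_{J₁}∘E_{J₂} = v^{⟨1_{J₂},1_{J₁}⟩}·E_{J₂}∘E_{J₁}` and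
`v^{⟨1_{J₁},1_{J₂}⟩}·F_{J₁}∘F_{J₂} = v^{⟨1_{J₂},1_{J₁}⟩}·F_{J₂}∘F_{J₁}` hold on the
Fock space whenever `J₁ ⊆ J₂`. -/
theorem fock_nest_relations (a₁ b₁ a₂ b₂ : ℝ) (h₁ : a₁ < b₁) (h₂ : a₂ < b₂)
    (hsub : Set.Ico a₁ b₁ ⊆ Set.Ico a₂ b₂) :
    vK ^ pairZ (indZ a₁ b₁) (indZ a₂ b₂) • (Eop a₁ b₁ ∘ₗ Eop a₂ b₂) =
      vK ^ pairZ (indZ a₂ b₂) (indZ a₁ b₁) • (Eop a₂ b₂ ∘ₗ Eop a₁ b₁) ∧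
    vK ^ pairZ (indZ a₁ b₁) (indZ a₂ b₂) • (Fop a₁ b₁ ∘ₗ Fop a₂ b₂) =
      vK ^ pairZ (indZ a₂ b₂) (indZ a₁ b₁) • (Fop a₂ b₂ ∘ₗ Fop a₁ b₁) := by
  obtain ⟨ha, hb⟩ := (Ico_subset_Ico_iff h₁).1 hsub
  by_cases he : a₁ = a₂ ∨ b₁ = b₂
  · have he' : a₂ = a₁ ∨ b₂ = b₁ := he.imp Eq.symm Eq.symm
    simp only [Eop_comp_Eop_eq_zero h₁ h₂ he, Eop_comp_Eop_eq_zero h₂ h₁ he',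
      Fop_comp_Fop_eq_zero h₁ h₂ he, Fop_comp_Fop_eq_zero h₂ h₁ he', smul_zero, and_self]
  · have hnest : Ico a₁ b₁ ⊆ Ico a₂ b₂ ∨ Ico a₂ b₂ ⊆ Ico a₁ b₁ := Or.inl hsub
    have hends : Disjoint ({a₁, b₁} : Set ℝ) {a₂, b₂} := by
      simp only [not_or] at he
      simp only [disjoint_insert_left, disjoint_singleton_left, mem_insert_iff,
        mem_singleton_iff, not_or]
      exact ⟨⟨he.1, (h₁.trans_le hb).ne⟩, (ha.trans_lt h₁).ne', he.2⟩
    rw [pairZ_indZ_indZ_eq_zero h₁ h₂ hnest hends,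
      pairZ_indZ_indZ_eq_zero h₂ h₁ hnest.symm hends.symm, Eop_comp_Eop_comm h₁ h₂ hnest hends,
      Fop_comp_Fop_comm h₁ h₂ hnest hends]
    exact ⟨rfl, rfl⟩
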